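/- arXiv:2304.13824 — 6 statements merged into one kernel-verified Lean document; each statement's English description precedes it below -/
import Mathlib

section
/- Let M ≥ 2 be an integer and a: ℤ → ℂ a finitely supported mask. For J ∈ ℕ, the mask a has order J sum rules with respect to M (i.e., its symbol ã(z) = ∑_k a(k) z^k is divisible by (1 + z + ⋯ + z^{M−1})^J as a Laurent polynomial) if and only if for every polynomial p of degree less than J and every γ ∈ ℤ, ∑_{k∈ℤ} p(γ + M k) a(γ + M k) = M^{-1} ∑_{k∈ℤ} p(k) a(k). -/
/-- The symbol `ã(z) = ∑_k a(k) z^k` of a (finitely supported) sequence, as a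
Laurent polynomial. -/
noncomputable def symb (a : ℤ → ℂ) : LaurentPolynomial ℂ :=
  ∑ᶠ k : ℤ, LaurentPolynomial.C (a k) * LaurentPolynomial.T k

/-!
Over `ℂ`, `1 + z + ⋯ + z^(M-1) = ∏ (z - ω)` over the `M`-th roots of unity `ω ≠ 1`, and these
factors are pairwise coprime, so the sum rules hold iff `(z - ω)^J ∣ ã` for each such `ω`.
Since `ω ≠ 0`, that divisibility is the vanishing at `ω` of the Hasse derivatives of order `< J`,
i.e. `∑_k p(k) a(k) ω^k = 0` for every `p` of degree `< J`: the Hasse derivatives are the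
moments against shifted falling factorials, which span the polynomials of degree `< J`.
Grouping `k` by its residue `γ` mod `M`, that sum is `R_p(ω)` with
`R_p(z) = ∑_{γ<M} S_p(γ) z^γ` and `S_p(γ) = ∑_k p(γ + M k) a(γ + M k)`. It vanishes at every
`ω ≠ 1` iff `1 + ⋯ + z^(M-1)` divides `R_p`, i.e. iff `S_p` is constant, the constant then being
`M⁻¹ ∑_k p(k) a(k)`.
-/

open Polynomial Finset Function
open LaurentPolynomial (T isUnit_T)
open scoped Nat

theorem Finset.prod_dvd_iff_of_pairwise_coprime {ι A : Type*} [CommRing A] {s : Finset ι}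
    {f : ι → A} (hs : (s : Set ι).Pairwise (IsCoprime on f)) {x : A} :
    ∏ i ∈ s, f i ∣ x ↔ ∀ i ∈ s, f i ∣ x :=
  ⟨fun h _ hi => (dvd_prod_of_mem f hi).trans h, prod_dvd_of_coprime hs⟩

theorem Polynomial.toLaurent_dvd_toLaurent_iff {R : Type*} [CommRing R] {P Q : R[X]}
    (hQ : IsCoprime X Q) : toLaurent Q ∣ toLaurent P ↔ Q ∣ P := by
  refine ⟨fun ⟨f, hf⟩ => ?_, _root_.map_dvd toLaurent⟩
  obtain ⟨n, B, hB⟩ := f.exists_T_pow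
  have hPB : P * X ^ n = Q * B := toLaurent_injective <| by
    rw [map_mul, map_mul, toLaurent_X_pow, hf, hB, mul_assoc]
  exact (hQ.symm.pow_right).dvd_of_dvd_mul_right ⟨B, hPB⟩

theorem Polynomial.X_sub_C_pow_dvd_iff_eval_hasseDeriv {R : Type*} [CommRing R] {P : R[X]}
    {r : R} {J : ℕ} : (X - C r) ^ J ∣ P ↔ ∀ j < J, (hasseDeriv j P).eval r = 0 := by
  simp only [X_sub_C_pow_dvd_iff, X_pow_dvd_iff, ← taylor_apply, taylor_coeff]

theorem Polynomial.factorial_mul_pow_mul_eval_hasseDeriv_X_pow {R : Type*} [CommRing R]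
    (j n : ℕ) (r : R) :
    j ! * r ^ j * (hasseDeriv j (X ^ n)).eval r = (descPochhammer R j).eval (n : R) * r ^ n := by
  rw [← monomial_one_right_eq_X_pow, hasseDeriv_monomial, eval_monomial,
    descPochhammer_eval_eq_descFactorial, Nat.descFactorial_eq_factorial_mul_choose]
  rcases le_or_gt j n with hjn | hnj
  · rw [Nat.cast_mul, ← pow_mul_pow_sub r hjn]; ring
  · simp [Nat.choose_eq_zero_of_lt hnj]

theorem Polynomial.Sequence.forall_degree_lt_eq_zero_iff {K V : Type*} [Field K]
    [AddCommGroup V] [Module K V] (S : Sequence K) (L : K[X] →ₗ[K] V) (J : ℕ) :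
    (∀ p : K[X], p.degree < J → L p = 0) ↔ ∀ j < J, L (S j) = 0 := by
  have hspan := S.span_degreeLT (m := J) fun i _ =>
    (leadingCoeff_ne_zero.mpr (S.ne_zero i)).isUnit
  constructor
  · intro h j hj
    exact h _ (by rw [S.degree_eq]; exact_mod_cast hj)
  · intro h p hp
    have hle : degreeLT K J ≤ LinearMap.ker L := by
      rw [← hspan, Submodule.span_le]
      rintro _ ⟨j, hj, rfl⟩
      exact h j hj
    exact hle (mem_degreeLT.mpr hp)

noncomputable def Polynomial.Sequence.shiftedDescPochhammer (R : Type*) [CommRing R] [IsDomain R]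
    (N : R) : Sequence R where
  elems' j := (descPochhammer R j).comp (X + C N)
  degree_eq' j := by
    rw [degree_eq_natDegree ((monic_descPochhammer R j).comp_X_add_C N).ne_zero, natDegree_comp,
      descPochhammer_natDegree, natDegree_X_add_C, mul_one]

theorem Polynomial.Sequence.eval_shiftedDescPochhammer {R : Type*} [CommRing R] [IsDomain R]
    (N : R) (j : ℕ) (x : R) :
    (shiftedDescPochhammer R N j).eval x = (descPochhammer R j).eval (x + N) := by
  simp only [shiftedDescPochhammer, eval_comp, eval_add, eval_X, eval_C]

section Moments

variable {K : Type*} [Field K] {s : Finset ℤ} {c : ℤ → K} {N : ℕ}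

theorem factorial_mul_pow_mul_eval_hasseDeriv_sum (hN : ∀ k ∈ s, 0 ≤ k + N) {ω : K}
    (hω : ω ≠ 0) (j : ℕ) :
    j ! * ω ^ j * (hasseDeriv j (∑ k ∈ s, C (c k) * X ^ (k + N).toNat)).eval ω =
      ω ^ N * ∑ k ∈ s, (Sequence.shiftedDescPochhammer K N j).eval (k : K) * c k * ω ^ k := by
  simp only [map_sum, eval_finsetSum, mul_sum]
  refine sum_congr rfl fun k hk => ?_
  have hkN : ((k + N).toNat : ℤ) = k + N := Int.toNat_of_nonneg (hN k hk)
  have hX := factorial_mul_pow_mul_eval_hasseDeriv_X_pow j (k + N).toNat ω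
  have hpow : ω ^ (k + N).toNat = ω ^ N * ω ^ k := by
    rw [← zpow_natCast, hkN, zpow_add₀ hω, zpow_natCast, mul_comm]
  rw [hpow, show (((k + N).toNat : ℕ) : K) = (k : K) + (N : K) by
    rw [← Int.cast_natCast, hkN, Int.cast_add, Int.cast_natCast]] at hX
  rw [Sequence.eval_shiftedDescPochhammer, ← smul_eq_C_mul, map_smul, eval_smul, smul_eq_mul]
  linear_combination c k * hX

theorem X_sub_C_pow_dvd_sum_iff [CharZero K] (hN : ∀ k ∈ s, 0 ≤ k + N) {ω : K} (hω : ω ≠ 0)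
    (J : ℕ) :
    (X - C ω) ^ J ∣ ∑ k ∈ s, C (c k) * X ^ (k + N).toNat ↔
      ∀ p : K[X], p.degree < J → ∑ k ∈ s, p.eval (k : K) * c k * ω ^ k = 0 := by
  let L : K[X] →ₗ[K] K :=
    { toFun := fun p => ∑ k ∈ s, p.eval (k : K) * c k * ω ^ k
      map_add' := fun p q => by simp only [eval_add, add_mul, sum_add_distrib]
      map_smul' := fun a p => by
        simp only [eval_smul, smul_eq_mul, mul_sum, mul_assoc, RingHom.id_apply] }
  change _ ↔ ∀ p : K[X], p.degree < J → L p = 0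
  rw [(Sequence.shiftedDescPochhammer K N).forall_degree_lt_eq_zero_iff L J,
    X_sub_C_pow_dvd_iff_eval_hasseDeriv]
  refine forall₂_congr fun j _ => ?_
  rw [← mul_right_inj' (mul_ne_zero (Nat.cast_ne_zero.mpr j.factorial_ne_zero) (pow_ne_zero j hω)),
    factorial_mul_pow_mul_eval_hasseDeriv_sum hN hω, mul_zero, mul_eq_zero,
    or_iff_right (pow_ne_zero N hω)]
  rfl

end Moments

theorem symb_eq_sum {a : ℤ → ℂ} {s : Finset ℤ} (hs : support a ⊆ s) :
    symb a = ∑ k ∈ s, LaurentPolynomial.C (a k) * T k := by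
  refine finsum_eq_sum_of_support_subset _ fun k hk => hs ?_
  rintro (h : a k = 0)
  simp [h] at hk

theorem toLaurent_X_sub_C_pow_dvd_symb_iff {a : ℤ → ℂ} (ha : (support a).Finite) {ω : ℂ}
    (hω : ω ≠ 0) (J : ℕ) :
    toLaurent ((X - C ω) ^ J) ∣ symb a ↔
      ∀ p : ℂ[X], p.degree < J → ∑ᶠ k : ℤ, p.eval (k : ℂ) * a k * ω ^ k = 0 := by
  obtain ⟨N, hN⟩ : ∃ N : ℕ, ∀ k ∈ ha.toFinset, 0 ≤ k + N := by
    obtain ⟨b, hb⟩ := ha.bddBelow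
    exact ⟨(-b).toNat, fun k hk => by have := hb (ha.mem_toFinset.mp hk); omega⟩
  have hsymb : symb a = toLaurent (∑ k ∈ ha.toFinset, C (a k) * X ^ (k + N).toNat) * T (-N) := by
    rw [symb_eq_sum ha.coe_toFinset.ge, map_sum, sum_mul]
    refine sum_congr rfl fun k hk => ?_
    rw [map_mul, toLaurent_C, toLaurent_X_pow, mul_assoc, ← LaurentPolynomial.T_add,
      Int.toNat_of_nonneg (hN k hk), add_neg_cancel_right]
  have hX : IsCoprime X ((X - C ω) ^ J) := by
    have := isCoprime_X_sub_C_of_isUnit_sub (R := ℂ) (a := 0) (sub_ne_zero.mpr hω.symm).isUnit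
    rw [C_0, sub_zero] at this
    exact this.pow_right
  have hsupp : ∀ p : ℂ[X], support (fun k : ℤ => p.eval (k : ℂ) * a k * ω ^ k) ⊆ ha.toFinset :=
    fun p => ((support_mul_subset_left _ _).trans (support_mul_subset_right _ _)).trans
      ha.coe_toFinset.ge
  rw [hsymb, (isUnit_T (R := ℂ) _).dvd_mul_right, toLaurent_dvd_toLaurent_iff hX,
    X_sub_C_pow_dvd_sum_iff hN hω]
  exact forall₂_congr fun p _ => by rw [finsum_eq_sum_of_support_subset _ (hsupp p)]

theorem Polynomial.geom_sum_X_eq_prod {K : Type*} [Field K] [DecidableEq K] {M : ℕ} {ζ : K}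
    (hζ : IsPrimitiveRoot ζ M) (hM : 0 < M) :
    ∑ i ∈ range M, (X : K[X]) ^ i = ∏ ω ∈ (nthRootsFinset M (1 : K)).erase 1, (X - C ω) := by
  have h1 : (1 : K) ∈ nthRootsFinset M (1 : K) := (mem_nthRootsFinset hM 1).mpr (one_pow M)
  apply mul_left_cancel₀ (X_sub_C_ne_zero (1 : K))
  rw [mul_prod_erase _ (fun ω => X - C ω) h1, ← X_pow_sub_one_eq_prod hM hζ, C_1,
    mul_geom_sum]

theorem Polynomial.coeff_sum_range_C_mul_X_pow {R : Type*} [Semiring R] (M : ℕ) (c : ℕ → R)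
    (n : ℕ) : (∑ i ∈ range M, C (c i) * X ^ i).coeff n = if n < M then c n else 0 := by
  simp only [finsetSum_coeff, coeff_C_mul_X_pow, sum_ite_eq, mem_range]

theorem Polynomial.geom_sum_X_dvd_iff {K : Type*} [Field K] {M : ℕ} (hM : M ≠ 0) (c : ℕ → K) :
    (∑ i ∈ range M, (X : K[X]) ^ i) ∣ ∑ i ∈ range M, C (c i) * X ^ i ↔ ∀ i < M, c i = c 0 := by
  have hΦ : ∑ i ∈ range M, (X : K[X]) ^ i = ∑ i ∈ range M, C 1 * X ^ i := by
    simp only [C_1, one_mul]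
  constructor
  · rintro ⟨q, hq⟩
    have hq₀ : q = C (q.coeff 0) := by
      rcases eq_or_ne q 0 with rfl | hq₀
      · simp
      apply eq_C_of_natDegree_eq_zero
      have hle : (∑ i ∈ range M, C (c i) * X ^ i).natDegree ≤ M - 1 :=
        natDegree_sum_le_of_forall_le _ _ fun i hi =>
          (natDegree_C_mul_X_pow_le _ _).trans (by have := mem_range.mp hi; omega)
      have hge : M - 1 ≤ (∑ i ∈ range M, (X : K[X]) ^ i).natDegree :=
        le_natDegree_of_ne_zero (by
          rw [hΦ, coeff_sum_range_C_mul_X_pow, if_pos (by omega)]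
          exact one_ne_zero)
      rw [hq, natDegree_mul (monic_geom_sum_X hM).ne_zero hq₀] at hle
      omega
    have hcoeff : ∀ n < M, c n = q.coeff 0 := fun n hn => by
      have := congrArg (coeff · n) hq
      rwa [hq₀, hΦ, coeff_mul_C, coeff_sum_range_C_mul_X_pow, coeff_sum_range_C_mul_X_pow,
        if_pos hn, if_pos hn, one_mul] at this
    exact fun i hi => (hcoeff i hi).trans (hcoeff 0 (Nat.pos_of_ne_zero hM)).symm
  · intro h
    refine ⟨C (c 0), ?_⟩
    ext n
    rw [hΦ, coeff_mul_C, coeff_sum_range_C_mul_X_pow, coeff_sum_range_C_mul_X_pow]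
    split_ifs with hn
    · rw [one_mul, h n hn]
    · rw [zero_mul]

noncomputable def residueSum {A : Type*} [AddCommMonoid A] (g : ℤ → A) (M : ℕ) (γ : ℤ) : A :=
  ∑ᶠ k : ℤ, g (γ + M * k)

section residueSum

variable {A : Type*} [AddCommMonoid A] {g : ℤ → A} {M : ℕ}

theorem residueSum_add_mul (γ t : ℤ) :
    residueSum g M (γ + M * t) = residueSum g M γ := by
  rw [residueSum, residueSum, ← finsum_comp_equiv (Equiv.addLeft t) (f := fun k => g (γ + M * k))]
  exact finsum_congr fun k => congrArg g (by simp only [Equiv.coe_addLeft]; ring)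

theorem finsum_eq_sum_range_residueSum (hg : (support g).Finite) (hM : M ≠ 0) :
    ∑ᶠ n, g n = ∑ γ ∈ range M, residueSum g M γ := by
  have := NeZero.mk hM
  let e : ℤ ≃ Fin M × ℤ := (Int.divModEquiv M).trans (Equiv.prodComm _ _)
  rw [← finsum_comp_equiv e.symm,
    finsum_curry (fun q => g (e.symm q)) (HasFiniteSupport.comp_of_injective e.symm.injective hg),
    finsum_eq_sum_of_fintype, ← Fin.sum_univ_eq_sum_range]
  refine sum_congr rfl fun γ _ => finsum_congr fun k => congrArg g ?_
  simp [e, add_comm, mul_comm]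

end residueSum

theorem finsum_mul_pow_eq_eval {K : Type*} [Field K] {g : ℤ → K} {M : ℕ}
    (hg : (support g).Finite) (hM : M ≠ 0) {ω : K} (hω : ω ^ M = 1) :
    ∑ᶠ n, g n * ω ^ n = (∑ γ ∈ range M, C (residueSum g M γ) * X ^ γ).eval ω := by
  have hω0 : ω ≠ 0 := fun h => by simp [h, hM] at hω
  rw [finsum_eq_sum_range_residueSum (hg.subset (support_mul_subset_left _ _)) hM,
    eval_finsetSum]
  refine sum_congr rfl fun γ _ => ?_
  rw [eval_C_mul, eval_X_pow, residueSum, residueSum, finsum_mul]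
  refine finsum_congr fun k => ?_
  rw [zpow_add₀ hω0, zpow_mul, zpow_natCast ω M, hω, one_zpow, mul_one, zpow_natCast]

theorem forall_residueSum_eq_iff {K : Type*} [Field K] [CharZero K] {g : ℤ → K} {M : ℕ}
    (hg : (support g).Finite) (hM : M ≠ 0) :
    (∀ i < M, residueSum g M i = residueSum g M 0) ↔
      ∀ γ : ℤ, residueSum g M γ = (M : K)⁻¹ * ∑ᶠ n, g n := by
  have hMK : (M : K) ≠ 0 := Nat.cast_ne_zero.mpr hM
  rw [finsum_eq_sum_range_residueSum hg hM]
  constructor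
  · intro h γ
    rw [sum_congr rfl fun i hi => h i (mem_range.mp hi), sum_const, card_range, nsmul_eq_mul,
      inv_mul_cancel_left₀ hMK, ← Int.emod_add_mul_ediv γ M, residueSum_add_mul]
    have hγ₀ : 0 ≤ γ % M := Int.emod_nonneg γ (by omega)
    have hγM : γ % M < M := Int.emod_lt_of_pos γ (by omega)
    rw [← Int.toNat_of_nonneg hγ₀]
    exact h _ (by omega)
  · intro h i _
    rw [h, h]

theorem forall_mem_nthRootsFinset_finsum_eq_zero_iff {K : Type*} [Field K] [CharZero K]
    [DecidableEq K] {g : ℤ → K} (hg : (support g).Finite) {M : ℕ} (hM : M ≠ 0) {ζ : K}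
    (hζ : IsPrimitiveRoot ζ M) :
    (∀ ω ∈ (nthRootsFinset M (1 : K)).erase 1, ∑ᶠ n, g n * ω ^ n = 0) ↔
      ∀ γ : ℤ, residueSum g M γ = (M : K)⁻¹ * ∑ᶠ n, g n := by
  have hroot : ∀ ω ∈ (nthRootsFinset M (1 : K)).erase 1, ω ^ M = 1 := fun ω hω =>
    (mem_nthRootsFinset (Nat.pos_of_ne_zero hM) 1).mp (mem_of_mem_erase hω)
  rw [← forall_residueSum_eq_iff hg hM]
  refine Iff.trans ?_ (geom_sum_X_dvd_iff hM fun i => residueSum g M i)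
  rw [geom_sum_X_eq_prod hζ (Nat.pos_of_ne_zero hM),
    prod_dvd_iff_of_pairwise_coprime fun ω _ ω' _ h =>
      isCoprime_X_sub_C_of_isUnit_sub (sub_ne_zero.mpr h).isUnit]
  refine forall₂_congr fun ω hω => ?_
  rw [finsum_mul_pow_eq_eval hg hM (hroot ω hω), dvd_iff_isRoot, IsRoot.def]

theorem sum_rules_characterization (M : ℕ) (hM : 2 ≤ M) (J : ℕ) (a : ℤ → ℂ)
    (ha : (Function.support a).Finite) :
    (∃ b : LaurentPolynomial ℂ,
        symb a = (∑ i ∈ Finset.range M, LaurentPolynomial.T (i : ℤ)) ^ J * b) ↔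
      (∀ p : Polynomial ℂ, p.degree < J → ∀ γ : ℤ,
        ∑ᶠ k : ℤ, Polynomial.eval ((γ : ℂ) + (M : ℂ) * (k : ℂ)) p * a (γ + (M : ℤ) * k)
          = (M : ℂ)⁻¹ * ∑ᶠ k : ℤ, Polynomial.eval (k : ℂ) p * a k) := by
  have hM0 : M ≠ 0 := by omega
  obtain ⟨ζ, hζ⟩ : ∃ ζ : ℂ, IsPrimitiveRoot ζ M := ⟨_, Complex.isPrimitiveRoot_exp M hM0⟩
  have hΦ : ∑ i ∈ range M, T (i : ℤ) =
      toLaurent (∏ ω ∈ (nthRootsFinset M (1 : ℂ)).erase 1, (X - C ω)) := by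
    simp only [← geom_sum_X_eq_prod hζ (Nat.pos_of_ne_zero hM0), map_sum, toLaurent_X_pow]
  set μ := (nthRootsFinset M (1 : ℂ)).erase 1
  have hcop : (μ : Set ℂ).Pairwise (IsCoprime on fun ω => toLaurent ((X - C ω) ^ J)) :=
    fun ω _ ω' _ h => ((isCoprime_X_sub_C_of_isUnit_sub (sub_ne_zero.mpr h).isUnit).pow).map _
  have hμ0 : ∀ ω ∈ μ, ω ≠ 0 := fun ω hω => by
    rintro rfl
    simp [μ, mem_nthRootsFinset (Nat.pos_of_ne_zero hM0), hM0] at hω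
  show (∑ i ∈ range M, T (i : ℤ)) ^ J ∣ symb a ↔ _
  rw [hΦ, ← map_pow, ← prod_pow, map_prod, prod_dvd_iff_of_pairwise_coprime hcop]
  calc (∀ ω ∈ μ, toLaurent ((X - C ω) ^ J) ∣ symb a)
      ↔ ∀ ω ∈ μ, ∀ p : ℂ[X], p.degree < J → ∑ᶠ k : ℤ, p.eval (k : ℂ) * a k * ω ^ k = 0 :=
        forall₂_congr fun ω hω => toLaurent_X_sub_C_pow_dvd_symb_iff ha (hμ0 ω hω) J
    _ ↔ ∀ p : ℂ[X], p.degree < J → ∀ ω ∈ μ, ∑ᶠ k : ℤ, p.eval (k : ℂ) * a k * ω ^ k = 0 :=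
        forall₂_comm
    _ ↔ _ := forall₂_congr fun p _ => by
        rw [forall_mem_nthRootsFinset_finsum_eq_zero_iff
          (g := fun k => p.eval (k : ℂ) * a k) (ha.subset (support_mul_subset_right _ _)) hM0 hζ]
        simp only [residueSum, Int.cast_add, Int.cast_mul, Int.cast_natCast]
end

section
/- Let M ≥ 2 and b: ℤ → ℂ a finitely supported mask. Define B_n by the symbol B̃_n(z) = b̃(z^{M^{n−1}}) b̃(z^{M^{n−2}}) ⋯ b̃(z^M) b̃(z), and let T_{b,M,γ} be the shifted transition operator (T_{b,M,γ} v)(n) = M ∑_{k} b(k) v(γ + M n − k). Then for all n ≥ 1 and every finitely supported v: ℤ → ℂ, (T_{b,M,γ})^n v = M^n (B_n * v)(γ + M γ + ⋯ + M^{n−1} γ + M^n ·), where * denotes convolution of sequences. -/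
/-- The shifted transition operator `(T_{b,M,γ} v)(n) = M ∑_k b(k) v(γ + M n - k)`. -/
noncomputable def transOp (M : ℕ) (γ : ℤ) (b : ℤ → ℂ) (v : ℤ → ℂ) : ℤ → ℂ :=
  fun n => (M : ℂ) * ∑ᶠ k : ℤ, b k * v (γ + (M : ℤ) * n - k)

/-- Convolution of sequences: `(u * v)(j) = ∑_k u(k) v(j - k)`. -/
noncomputable def conv (u v : ℤ → ℂ) : ℤ → ℂ := fun j => ∑ᶠ k : ℤ, u k * v (j - k)

/-- The iterated masks: `B_0 = δ` and `B̃_{n+1}(z) = b̃(z^{M^n}) B̃_n(z)`, i.e.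
`B_{n+1}(j) = ∑_k b(k) B_n(j - M^n k)`, which gives
`B̃_n(z) = b̃(z^{M^{n-1}}) b̃(z^{M^{n-2}}) ⋯ b̃(z^M) b̃(z)`. -/
noncomputable def maskIter (M : ℕ) (b : ℤ → ℂ) : ℕ → ℤ → ℂ
  | 0 => fun j => if j = 0 then 1 else 0
  | n + 1 => fun j => ∑ᶠ k : ℤ, b k * maskIter M b n (j - (M : ℤ) ^ n * k)

lemma maskSupp (M : ℕ) (b : ℤ → ℂ) (hb : (Function.support b).Finite) :
    ∀ n, (Function.support (maskIter M b n)).Finite := by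
  intro n
  induction n with
  | zero =>
    apply Set.Finite.subset (Set.finite_singleton (0 : ℤ))
    intro j hj
    simp only [Set.mem_singleton_iff]
    by_contra h
    simp [maskIter, Function.mem_support, h] at hj
  | succ n ih =>
    apply Set.Finite.subset
      (Set.Finite.biUnion hb (fun k _ => (ih.image (fun l => (M : ℤ) ^ n * k + l))))
    intro j hj
    simp only [Function.mem_support, maskIter] at hj
    have : ∃ k, b k * maskIter M b n (j - (M : ℤ) ^ n * k) ≠ 0 := by
      by_contra h
      push_neg at h
      rw [finsum_congr h] at hj
      simp at hj
    obtain ⟨k, hk⟩ := this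
    refine Set.mem_biUnion (show k ∈ Function.support b from fun h => by simp [h] at hk) ?_
    exact ⟨j - (M:ℤ)^n * k, fun h => by simp [h] at hk, by ring⟩

theorem transOp_iterate_formula' (M : ℕ) (γ : ℤ) (b : ℤ → ℂ)
    (hb : (Function.support b).Finite) :
    ∀ n : ℕ, ∀ v : ℤ → ℂ, (Function.support v).Finite → ∀ m : ℤ,
      (transOp M γ b)^[n] v m
        = (M : ℂ) ^ n * conv (maskIter M b n) v
            ((∑ i ∈ Finset.range n, (M : ℤ) ^ i) * γ + (M : ℤ) ^ n * m) := by
  intro n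
  induction n with
  | zero =>
    intro v hv m
    simp only [Function.iterate_zero, id, pow_zero, one_mul, Finset.range_zero,
      Finset.sum_empty, zero_mul, zero_add, conv, maskIter]
    rw [finsum_eq_single _ (0 : ℤ) (fun x hx => by simp [hx])]
    simp
  | succ n ih =>
    intro v hv m
    rw [Function.iterate_succ_apply']
    set Bn := maskIter M b n with hBn
    have hBnf := maskSupp M b hb n
    set A := hb.toFinset with hA
    set C := hBnf.toFinset with hC
    set D : Finset ℤ := A.biUnion (fun k => C.image (fun l => (M : ℤ) ^ n * k + l)) with hD
    set T : ℤ := (∑ i ∈ Finset.range (n+1), (M : ℤ) ^ i) * γ + (M : ℤ) ^ (n+1) * m with hT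
    have hAmem : ∀ {f : ℤ → ℂ}, (∀ k, b k = 0 → f k = 0) → Function.support f ⊆ ↑A := by
      intro f hf k hk
      simp only [Function.mem_support, ne_eq] at hk
      simp only [hA, Set.Finite.coe_toFinset, Function.mem_support, ne_eq]
      exact fun h => hk (hf k h)
    have hCmem : ∀ {f : ℤ → ℂ}, (∀ l, Bn l = 0 → f l = 0) → Function.support f ⊆ ↑C := by
      intro f hf l hl
      simp only [Function.mem_support, ne_eq] at hl
      simp only [hC, Set.Finite.coe_toFinset, Function.mem_support, ne_eq]
      exact fun h => hl (hf l h)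
    -- LHS
    have hL : transOp M γ b ((transOp M γ b)^[n] v) m
        = (M : ℂ) ^ (n+1) * ∑ k ∈ A, b k * ∑ l ∈ C, Bn l * v (T - (M:ℤ)^n * k - l) := by
      rw [transOp]
      have h1 : ∀ k : ℤ, b k * (transOp M γ b)^[n] v (γ + (M : ℤ) * m - k)
          = b k * ((M : ℂ) ^ n * ∑ l ∈ C, Bn l * v (T - (M:ℤ)^n * k - l)) := by
        intro k
        rw [ih v hv (γ + (M : ℤ) * m - k)]
        congr 1
        congr 1
        rw [conv]
        rw [finsum_eq_sum_of_support_subset _ (s := C)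
          (hCmem (fun l h => by simp [h]))]
        apply Finset.sum_congr rfl
        intro l _
        congr 2
        rw [hT, Finset.sum_range_succ]
        push_cast
        ring
      rw [finsum_congr h1]
      rw [finsum_eq_sum_of_support_subset _ (s := A)
        (hAmem (fun k h => by simp [h]))]
      rw [Finset.mul_sum, Finset.mul_sum]
      apply Finset.sum_congr rfl
      intro k _
      ring
    rw [hL]
    congr 1
    -- RHS
    rw [conv]
    have hDmem : ∀ k ∈ A, ∀ j : ℤ, Bn (j - (M:ℤ)^n * k) ≠ 0 → j ∈ D := by
      intro k hk j hj
      apply Finset.mem_biUnion.2 ⟨k, hk, ?_⟩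
      apply Finset.mem_image.2 ⟨j - (M:ℤ)^n * k, ?_, by ring⟩
      simpa [hC, Set.Finite.mem_toFinset] using hj
    rw [finsum_eq_sum_of_support_subset _ (s := D) (fun j hj => by
      simp only [Function.mem_support, maskIter] at hj
      have : ∃ k, b k * Bn (j - (M : ℤ) ^ n * k) ≠ 0 := by
        by_contra h
        push_neg at h
        rw [show (fun k => b k * Bn (j - (M:ℤ)^n * k)) = fun _ => (0:ℂ) from funext h] at hj
        simp at hj
      obtain ⟨k, hk⟩ := this
      have hkA : k ∈ A := by
        simp only [hA, Set.Finite.mem_toFinset, Function.mem_support, ne_eq]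
        exact fun h => by simp [h] at hk
      exact hDmem k hkA j (fun h => by simp [h] at hk))]
    have hexp : ∀ j ∈ D, maskIter M b (n+1) j * v (T - j)
        = ∑ k ∈ A, b k * Bn (j - (M:ℤ)^n * k) * v (T - j) := by
      intro j _
      rw [show maskIter M b (n+1) j = ∑ᶠ k, b k * Bn (j - (M:ℤ)^n * k) from rfl]
      rw [finsum_eq_sum_of_support_subset _ (s := A)
        (hAmem (fun k h => by simp [h]))]
      rw [Finset.sum_mul]
    rw [Finset.sum_congr rfl hexp, Finset.sum_comm]
    apply Finset.sum_congr rfl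
    intro k hk
    rw [Finset.mul_sum]
    rw [← finsum_eq_sum_of_support_subset (s := D)
      (fun j => b k * Bn (j - (M:ℤ)^n * k) * v (T - j))
      (fun j hj => hDmem k hk j (fun h => by
        simp only [Function.mem_support, h, mul_zero, zero_mul, ne_eq,
          not_true_eq_false] at hj))]
    rw [← finsum_comp (g := fun j => b k * Bn (j - (M:ℤ)^n * k) * v (T - j))
      (e := fun l => (M:ℤ)^n * k + l)
      ⟨add_right_injective _, fun y => ⟨y - (M:ℤ)^n * k, by ring⟩⟩]
    rw [finsum_eq_sum_of_support_subset _ (s := C)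
      (hCmem (fun l h => by
        have h1 : (M:ℤ)^n * k + l - (M:ℤ)^n * k = l := by ring
        simp [h1, h]))]
    apply Finset.sum_congr rfl
    intro l _
    have h1 : (M:ℤ)^n * k + l - (M:ℤ)^n * k = l := by ring
    have h2 : T - ((M:ℤ)^n * k + l) = T - (M:ℤ)^n * k - l := by ring
    rw [h1, h2]; ring

theorem transOp_iterate_formula (M : ℕ) (hM : 2 ≤ M) (γ : ℤ) (b : ℤ → ℂ)
    (hb : (Function.support b).Finite) :
    ∀ n : ℕ, 1 ≤ n → ∀ v : ℤ → ℂ, (Function.support v).Finite → ∀ m : ℤ,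
      (transOp M γ b)^[n] v m
        = (M : ℂ) ^ n * conv (maskIter M b n) v
            ((∑ i ∈ Finset.range n, (M : ℤ) ^ i) * γ + (M : ℤ) ^ n * m) := by
  intro n _
  exact transOp_iterate_formula' M γ b hb n
end

section
/- Let M ≥ 2 and a: ℤ → ℂ a finitely supported mask with ∑_k a(k) = 1 and order J sum rules with respect to M (i.e., ã(z) = (1+z+⋯+z^{M−1})^J b̃(z)). Define (S_{a,M} v)(j) = M ∑_k v(k) a(j − M k). Then for every polynomial p of degree < J and every x ∈ ℤ, (S_{a,M} p)(x) = ∑_{k∈ℤ} p(M^{-1}(x − k)) a(k), where p on the left denotes the sequence k ↦ p(k). In particular the sequence S_{a,M} p agrees with a polynomial of degree < J evaluated at integers. -/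
/-- The subdivision operator `(S_{a,M} v)(j) = M ∑_k v(k) a(j - M k)`. -/
noncomputable def subdiv (M : ℕ) (a : ℤ → ℂ) (v : ℤ → ℂ) : ℤ → ℂ :=
  fun j => (M : ℂ) * ∑ᶠ k : ℤ, v k * a (j - (M : ℤ) * k)

open PowerSeries LaurentPolynomial Finset

noncomputable def wfun (ω : ℂ) (k : ℤ) : PowerSeries ℂ :=
  PowerSeries.C (ω ^ k) * PowerSeries.rescale ((k : ℤ) : ℂ) (PowerSeries.exp ℂ)

lemma wfun_add (ω : ℂ) (hω : ω ≠ 0) (k l : ℤ) :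
    wfun ω (k + l) = wfun ω k * wfun ω l := by
  unfold wfun
  rw [zpow_add₀ hω, map_mul]
  have : ((↑(k + l) : ℂ)) = (k : ℂ) + (l : ℂ) := by push_cast; ring
  rw [this, ← PowerSeries.exp_mul_exp_eq_exp_add]
  ring

lemma wfun_zero (ω : ℂ) : wfun ω 0 = 1 := by
  unfold wfun
  simp [PowerSeries.rescale_zero]

noncomputable def Fhom (ω : ℂ) (hω : ω ≠ 0) : Multiplicative ℤ →* PowerSeries ℂ where
  toFun k := wfun ω (Multiplicative.toAdd k)
  map_one' := wfun_zero ω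
  map_mul' k l := wfun_add ω hω _ _

noncomputable def Phi (ω : ℂ) (hω : ω ≠ 0) : LaurentPolynomial ℂ →ₐ[ℂ] PowerSeries ℂ :=
  AddMonoidAlgebra.lift ℂ (PowerSeries ℂ) ℤ (Fhom ω hω)

lemma Phi_C_mul_T (ω : ℂ) (hω : ω ≠ 0) (c : ℂ) (k : ℤ) :
    Phi ω hω (LaurentPolynomial.C c * LaurentPolynomial.T k) = c • wfun ω k := by
  rw [← LaurentPolynomial.single_eq_C_mul_T]
  exact AddMonoidAlgebra.lift_single _ _ _

lemma coeff_wfun (ω : ℂ) (j : ℕ) (k : ℤ) :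
    PowerSeries.coeff j (wfun ω k) = ω ^ k * (k : ℂ) ^ j * ((j.factorial : ℂ))⁻¹ := by
  unfold wfun
  rw [PowerSeries.coeff_C_mul, PowerSeries.coeff_rescale, PowerSeries.coeff_exp]
  have : (algebraMap ℚ ℂ) (1 / j.factorial) = ((j.factorial : ℂ))⁻¹ := by
    push_cast
    simp
  rw [this]
  ring

lemma constCoeff_wfun (ω : ℂ) (k : ℤ) :
    PowerSeries.constantCoeff (wfun ω k) = ω ^ k := by
  rw [← PowerSeries.coeff_zero_eq_constantCoeff_apply, coeff_wfun]
  simp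

lemma geom_zero {ω : ℂ} (M : ℕ) (hωM : ω ^ M = 1) (hω1 : ω ≠ 1) :
    ∑ i ∈ Finset.range M, ω ^ i = 0 := by
  have h := geom_sum_mul ω M
  rw [hωM, sub_self] at h
  rcases mul_eq_zero.mp h with h' | h'
  · exact h'
  · exact absurd (sub_eq_zero.mp h') hω1

lemma momentsA (M : ℕ) (hM : 2 ≤ M) (J : ℕ) (a : ℤ → ℂ) (ha : (Function.support a).Finite)
    (hsr : ∃ b : LaurentPolynomial ℂ,
      symb a = (∑ i ∈ Finset.range M, LaurentPolynomial.T (i : ℤ)) ^ J * b)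
    (ω : ℂ) (hωM : ω ^ M = 1) (hω1 : ω ≠ 1) (j : ℕ) (hj : j < J) :
    ∑ s ∈ ha.toFinset, a s * ω ^ s * (s : ℂ) ^ j = 0 := by
  have hω : ω ≠ 0 := by
    intro h
    rw [h, zero_pow (by omega : M ≠ 0)] at hωM
    exact one_ne_zero hωM.symm
  -- symb a as a finite sum
  have hsupp : Function.support (fun k : ℤ => LaurentPolynomial.C (a k) * LaurentPolynomial.T k)
      ⊆ (ha.toFinset : Set ℤ) := by
    intro k hk
    simp only [Function.mem_support] at hk
    have : a k ≠ 0 := by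
      intro h0
      rw [h0, map_zero, zero_mul] at hk
      exact hk rfl
    simpa using this
  have hsymb : symb a = ∑ s ∈ ha.toFinset, LaurentPolynomial.C (a s) * LaurentPolynomial.T s :=
    finsum_eq_sum_of_support_subset _ hsupp
  -- apply Phi
  obtain ⟨b, hb⟩ := hsr
  have hPhi1 : Phi ω hω (symb a) = ∑ s ∈ ha.toFinset, a s • wfun ω s := by
    rw [hsymb, map_sum]
    exact Finset.sum_congr rfl fun s _ => Phi_C_mul_T ω hω _ _
  -- divisibility by X^J
  have hT : ∀ i : ℤ, Phi ω hω (LaurentPolynomial.T i) = wfun ω i := by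
    intro i
    have := Phi_C_mul_T ω hω 1 i
    simpa using this
  have hconst : PowerSeries.constantCoeff
      (Phi ω hω (∑ i ∈ Finset.range M, LaurentPolynomial.T (i : ℤ))) = 0 := by
    rw [map_sum, map_sum]
    have : ∀ i ∈ Finset.range M, PowerSeries.constantCoeff
        (Phi ω hω (LaurentPolynomial.T (i : ℤ))) = ω ^ i := by
      intro i _
      rw [hT, constCoeff_wfun, zpow_natCast]
    rw [Finset.sum_congr rfl this]
    exact geom_zero M hωM hω1
  have hdvd : (PowerSeries.X : PowerSeries ℂ) ^ J ∣ Phi ω hω (symb a) := by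
    rw [hb, map_mul, map_pow]
    exact Dvd.dvd.mul_right (pow_dvd_pow_of_dvd (PowerSeries.X_dvd_iff.mpr hconst) J) _
  have hcoeff : PowerSeries.coeff j (Phi ω hω (symb a)) = 0 :=
    PowerSeries.X_pow_dvd_iff.mp hdvd j hj
  rw [hPhi1, map_sum] at hcoeff
  have hcoeff2 : ∑ s ∈ ha.toFinset, a s * (ω ^ s * (s : ℂ) ^ j * ((j.factorial : ℂ))⁻¹) = 0 := by
    rw [← hcoeff]
    exact Finset.sum_congr rfl fun s _ => by
      rw [PowerSeries.coeff_smul, coeff_wfun]; rfl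
  have hfact : ((j.factorial : ℂ))⁻¹ ≠ 0 := by
    simp [Nat.factorial_ne_zero]
  have h0 : (∑ s ∈ ha.toFinset, a s * ω ^ s * (s : ℂ) ^ j) * ((j.factorial : ℂ))⁻¹ = 0 := by
    rw [Finset.sum_mul, ← hcoeff2]
    exact Finset.sum_congr rfl fun s _ => by ring
  exact (mul_eq_zero.mp h0).resolve_right hfact

lemma momentsB (M : ℕ) (hM : 2 ≤ M) (J : ℕ) (a : ℤ → ℂ) (ha : (Function.support a).Finite)
    (hsr : ∃ b : LaurentPolynomial ℂ,
      symb a = (∑ i ∈ Finset.range M, LaurentPolynomial.T (i : ℤ)) ^ J * b)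
    (ω : ℂ) (hωM : ω ^ M = 1) (hω1 : ω ≠ 1) (q : Polynomial ℂ) (hq : q.degree < J) :
    ∑ s ∈ ha.toFinset, a s * ω ^ s * q.eval (s : ℂ) = 0 := by
  rcases eq_or_ne q 0 with rfl | hq0
  · simp
  have hn : q.natDegree < J := (Polynomial.natDegree_lt_iff_degree_lt hq0).mpr hq
  have heval : ∀ s : ℤ, q.eval (s : ℂ)
      = ∑ i ∈ Finset.range (q.natDegree + 1), q.coeff i * (s : ℂ) ^ i := fun s =>
    Polynomial.eval_eq_sum_range _
  calc ∑ s ∈ ha.toFinset, a s * ω ^ s * q.eval (s : ℂ)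
      = ∑ s ∈ ha.toFinset, ∑ i ∈ Finset.range (q.natDegree + 1),
          q.coeff i * (a s * ω ^ s * (s : ℂ) ^ i) := by
        refine Finset.sum_congr rfl fun s _ => ?_
        rw [heval s, Finset.mul_sum]
        exact Finset.sum_congr rfl fun i _ => by ring
    _ = ∑ i ∈ Finset.range (q.natDegree + 1),
          q.coeff i * ∑ s ∈ ha.toFinset, a s * ω ^ s * (s : ℂ) ^ i := by
        rw [Finset.sum_comm]
        exact Finset.sum_congr rfl fun i _ => by rw [Finset.mul_sum]
    _ = 0 := by
        refine Finset.sum_eq_zero fun i hi => ?_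
        rw [momentsA M hM J a ha hsr ω hωM hω1 i (by
          have := Finset.mem_range.mp hi; omega), mul_zero]

lemma comp_degree_lt (p g : Polynomial ℂ) (hg : g.natDegree ≤ 1) (J : ℕ)
    (hp : p.degree < J) : (p.comp g).degree < J := by
  rcases eq_or_ne (p.comp g) 0 with h | h
  · rw [h, Polynomial.degree_zero]
    exact WithBot.bot_lt_coe J
  · have hp0 : p ≠ 0 := fun h0 => h (by rw [h0, Polynomial.zero_comp])
    have h1 : (p.comp g).natDegree ≤ p.natDegree :=
      le_trans Polynomial.natDegree_comp_le
        (by calc p.natDegree * g.natDegree ≤ p.natDegree * 1 := Nat.mul_le_mul_left _ hg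
              _ = p.natDegree := mul_one _)
    have hpJ : p.natDegree < J := (Polynomial.natDegree_lt_iff_degree_lt hp0).mpr hp
    rw [Polynomial.degree_eq_natDegree h]
    exact_mod_cast lt_of_le_of_lt h1 hpJ

lemma lin_natDegree (c d : ℂ) :
    (Polynomial.C c * (Polynomial.C d - Polynomial.X)).natDegree ≤ 1 := by
  refine le_trans Polynomial.natDegree_mul_le ?_
  have h1 : (Polynomial.C d - Polynomial.X : Polynomial ℂ).natDegree ≤ 1 :=
    le_trans (Polynomial.natDegree_sub_le _ _) (by simp)
  simp only [Polynomial.natDegree_C, zero_add]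
  exact h1

lemma lin_natDegree' (c d : ℂ) :
    (Polynomial.C c * (Polynomial.X - Polynomial.C d)).natDegree ≤ 1 := by
  refine le_trans Polynomial.natDegree_mul_le ?_
  have h1 : (Polynomial.X - Polynomial.C d : Polynomial ℂ).natDegree ≤ 1 :=
    le_trans (Polynomial.natDegree_sub_le _ _) (by simp)
  simp only [Polynomial.natDegree_C, zero_add]
  exact h1

theorem subdivision_polynomial_reproduction (M : ℕ) (hM : 2 ≤ M) (J : ℕ)
    (a : ℤ → ℂ) (ha : (Function.support a).Finite)
    (hsum : ∑ᶠ k : ℤ, a k = 1)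
    (hsr : ∃ b : LaurentPolynomial ℂ,
      symb a = (∑ i ∈ Finset.range M, LaurentPolynomial.T (i : ℤ)) ^ J * b) :
    ∀ p : Polynomial ℂ, p.degree < J →
      (∀ x : ℤ, subdiv M a (fun k : ℤ => Polynomial.eval (k : ℂ) p) x
          = ∑ᶠ k : ℤ, Polynomial.eval ((M : ℂ)⁻¹ * ((x : ℂ) - (k : ℂ))) p * a k) ∧
        ∃ q : Polynomial ℂ, q.degree < J ∧
          ∀ x : ℤ, subdiv M a (fun k : ℤ => Polynomial.eval (k : ℂ) p) x
            = Polynomial.eval (x : ℂ) q := by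
  intro p hp
  classical
  have hM0 : (M : ℂ) ≠ 0 := Nat.cast_ne_zero.mpr (by omega)
  have hMz : (M : ℤ) ≠ 0 := by exact_mod_cast (by omega : M ≠ 0)
  set S := ha.toFinset with hS
  -- the family of polynomials q_x(y) = p(M⁻¹ (x - y))
  have hgdeg : ∀ x : ℤ, (p.comp (Polynomial.C ((M:ℂ)⁻¹) *
      (Polynomial.C (x:ℂ) - Polynomial.X))).degree < J :=
    fun x => comp_degree_lt p _ (lin_natDegree _ _) J hp
  have hgeval : ∀ x s : ℤ, (p.comp (Polynomial.C ((M:ℂ)⁻¹) *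
      (Polynomial.C (x:ℂ) - Polynomial.X))).eval (s:ℂ)
      = p.eval ((M:ℂ)⁻¹ * ((x:ℂ) - (s:ℂ))) := by
    intro x s
    simp [Polynomial.eval_comp]
  -- primitive root of unity
  have hζ := Complex.isPrimitiveRoot_exp M (by omega)
  set ζ := Complex.exp (2 * Real.pi * Complex.I / M) with hζdef
  have hζ0 : ζ ≠ 0 := Complex.exp_ne_zero _
  have hζM : ζ ^ M = 1 := hζ.pow_eq_one
  -- RHS finsum as finite sum
  have hR : ∀ x : ℤ, (∑ᶠ k : ℤ, p.eval ((M:ℂ)⁻¹ * ((x:ℂ) - (k:ℂ))) * a k)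
      = ∑ s ∈ S, p.eval ((M:ℂ)⁻¹ * ((x:ℂ) - (s:ℂ))) * a s := by
    intro x
    refine finsum_eq_sum_of_support_subset _ ?_
    intro k hk
    simp only [Function.mem_support] at hk
    have : a k ≠ 0 := fun h0 => hk (by rw [h0, mul_zero])
    simpa [hS] using this
  -- root-of-unity detector
  have hdet : ∀ n : ℤ, (∑ i ∈ Finset.range M, (ζ ^ n) ^ i)
      = if (M:ℤ) ∣ n then (M:ℂ) else 0 := by
    intro n
    by_cases hd : (M:ℤ) ∣ n
    · rw [if_pos hd, (hζ.zpow_eq_one_iff_dvd n).mpr hd]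
      simp
    · rw [if_neg hd]
      refine geom_zero M ?_ ?_
      · rw [← zpow_natCast (ζ ^ n), ← zpow_mul, mul_comm, zpow_mul, zpow_natCast, hζM, one_zpow]
      · exact fun h => hd ((hζ.zpow_eq_one_iff_dvd n).mp h)
  -- vanishing of twisted sums
  have hvan : ∀ x : ℤ, ∀ i ∈ Finset.range M, i ≠ 0 →
      ∑ s ∈ S, p.eval ((M:ℂ)⁻¹ * ((x:ℂ) - (s:ℂ))) * a s * (ζ ^ ((x:ℤ) - s)) ^ i = 0 := by
    intro x i hi hi0
    set ω : ℂ := (ζ ^ i)⁻¹ with hω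
    have hωM : ω ^ M = 1 := by
      rw [hω, inv_pow, ← pow_mul, mul_comm, pow_mul, hζM, one_pow, inv_one]
    have hω1 : ω ≠ 1 := by
      rw [hω]
      intro h
      exact hζ.pow_ne_one_of_pos_of_lt hi0 (Finset.mem_range.mp hi)
        (by rwa [inv_eq_one] at h)
    have hsplit : ∀ s : ℤ, (ζ ^ ((x:ℤ) - s)) ^ i = (ζ ^ i) ^ (x:ℤ) * ω ^ (s:ℤ) := by
      intro s
      rw [← zpow_natCast (ζ ^ ((x:ℤ) - s)) i, ← zpow_mul]
      rw [hω, ← zpow_natCast ζ i, ← zpow_mul, ← zpow_neg, ← zpow_mul]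
      rw [← zpow_add₀ hζ0]
      congr 1
      ring
    have hzero := momentsB M hM J a ha hsr ω hωM hω1 _ (hgdeg x)
    calc ∑ s ∈ S, p.eval ((M:ℂ)⁻¹ * ((x:ℂ) - (s:ℂ))) * a s * (ζ ^ ((x:ℤ) - s)) ^ i
        = (ζ ^ i) ^ (x:ℤ) * ∑ s ∈ S, a s * ω ^ s *
            (p.comp (Polynomial.C ((M:ℂ)⁻¹) * (Polynomial.C (x:ℂ) - Polynomial.X))).eval (s:ℂ) := by
          rw [Finset.mul_sum]
          refine Finset.sum_congr rfl fun s _ => ?_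
          rw [hsplit s, hgeval]
          ring
      _ = 0 := by rw [hzero, mul_zero]
  -- the filter identity
  have hF : ∀ x : ℤ, (M:ℂ) * ∑ s ∈ S.filter (fun s => (M:ℤ) ∣ ((x:ℤ) - s)),
        p.eval ((M:ℂ)⁻¹ * ((x:ℂ) - (s:ℂ))) * a s
      = ∑ s ∈ S, p.eval ((M:ℂ)⁻¹ * ((x:ℂ) - (s:ℂ))) * a s := by
    intro x
    rw [Finset.mul_sum, Finset.sum_filter]
    calc ∑ s ∈ S, (if (M:ℤ) ∣ ((x:ℤ) - s) then
            (M:ℂ) * (p.eval ((M:ℂ)⁻¹ * ((x:ℂ) - (s:ℂ))) * a s) else 0)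
        = ∑ s ∈ S, p.eval ((M:ℂ)⁻¹ * ((x:ℂ) - (s:ℂ))) * a s *
            ∑ i ∈ Finset.range M, (ζ ^ ((x:ℤ) - s)) ^ i := by
          refine Finset.sum_congr rfl fun s _ => ?_
          rw [hdet]
          split_ifs with h
          · ring
          · rw [mul_zero]
      _ = ∑ i ∈ Finset.range M, ∑ s ∈ S,
            p.eval ((M:ℂ)⁻¹ * ((x:ℂ) - (s:ℂ))) * a s * (ζ ^ ((x:ℤ) - s)) ^ i := by
          rw [Finset.sum_comm]
          exact Finset.sum_congr rfl fun s _ => by rw [Finset.mul_sum]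
      _ = ∑ s ∈ S, p.eval ((M:ℂ)⁻¹ * ((x:ℂ) - (s:ℂ))) * a s := by
          rw [Finset.sum_eq_single_of_mem 0 (Finset.mem_range.mpr (by omega))
            (fun i hi hi0 => hvan x i hi hi0)]
          exact Finset.sum_congr rfl fun s _ => by rw [pow_zero, mul_one]
  -- the subdivision finsum as a filtered sum
  have hL : ∀ x : ℤ, (∑ᶠ k : ℤ, p.eval ((k:ℤ):ℂ) * a ((x:ℤ) - (M:ℤ) * k))
      = ∑ s ∈ S.filter (fun s => (M:ℤ) ∣ ((x:ℤ) - s)),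
          p.eval ((M:ℂ)⁻¹ * ((x:ℂ) - (s:ℂ))) * a s := by
    intro x
    set P : ℤ → Prop := fun s => (M:ℤ) ∣ ((x:ℤ) - s) with hP
    set e : ℤ → ℤ := fun s => ((x:ℤ) - s) / M with he
    have hes : ∀ s, P s → (x:ℤ) - (M:ℤ) * e s = s := by
      intro s hs
      have h := Int.mul_ediv_cancel' hs
      simp only [he]
      omega
    have hsupp : Function.support (fun k : ℤ => p.eval ((k:ℤ):ℂ) * a ((x:ℤ) - (M:ℤ) * k))
        ⊆ ((S.filter P).image e : Set ℤ) := by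
      intro k hk
      simp only [Function.mem_support] at hk
      have hak : a ((x:ℤ) - (M:ℤ) * k) ≠ 0 := fun h0 => hk (by rw [h0, mul_zero])
      have hmem : ((x:ℤ) - (M:ℤ) * k) ∈ S := by simpa [hS] using hak
      have hPs : P ((x:ℤ) - (M:ℤ) * k) := ⟨k, by ring⟩
      have hek : e ((x:ℤ) - (M:ℤ) * k) = k := by
        simp only [he]
        rw [(by ring : (x:ℤ) - ((x:ℤ) - (M:ℤ) * k) = (M:ℤ) * k)]
        exact Int.mul_ediv_cancel_left k hMz
      simp only [Finset.coe_image, Set.mem_image, Finset.mem_coe, Finset.mem_filter]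
      exact ⟨_, ⟨hmem, hPs⟩, hek⟩
    rw [finsum_eq_sum_of_support_subset _ hsupp]
    rw [Finset.sum_image (fun s hs t ht hst => by
      have hs' := hes s (Finset.mem_filter.mp hs).2
      have ht' := hes t (Finset.mem_filter.mp ht).2
      rw [← hs', ← ht', hst])]
    refine Finset.sum_congr rfl fun s hs => ?_
    have hPs : P s := (Finset.mem_filter.mp hs).2
    have h1 : (x:ℤ) - (M:ℤ) * e s = s := hes s hPs
    have h2 : ((e s : ℤ):ℂ) = (M:ℂ)⁻¹ * ((x:ℂ) - (s:ℂ)) := by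
      have hcast : (M:ℂ) * ((e s : ℤ):ℂ) = (x:ℂ) - (s:ℂ) := by
        have : (M:ℤ) * e s = (x:ℤ) - s := Int.mul_ediv_cancel' hPs
        exact_mod_cast congrArg (Int.cast : ℤ → ℂ) this
      rw [← hcast, inv_mul_cancel_left₀ hM0]
    rw [h1, h2]
  -- part 1
  have hpart1 : ∀ x : ℤ, subdiv M a (fun k : ℤ => Polynomial.eval (k : ℂ) p) x
      = ∑ s ∈ S, p.eval ((M:ℂ)⁻¹ * ((x:ℂ) - (s:ℂ))) * a s := by
    intro x
    unfold subdiv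
    rw [hL x, hF x]
  constructor
  · intro x
    rw [hpart1 x, hR x]
  · -- part 2
    refine ⟨∑ s ∈ S, Polynomial.C (a s) * p.comp (Polynomial.C ((M:ℂ)⁻¹) *
        (Polynomial.X - Polynomial.C (s:ℂ))), ?_, ?_⟩
    · refine lt_of_le_of_lt (Polynomial.degree_sum_le _ _) ?_
      rw [Finset.sup_lt_iff (by exact WithBot.bot_lt_coe J)]
      intro s _
      have hcomp : (p.comp (Polynomial.C ((M:ℂ)⁻¹) * (Polynomial.X - Polynomial.C (s:ℂ)))).degree < J :=
        comp_degree_lt p _ (lin_natDegree' _ _) J hp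
      calc (Polynomial.C (a s) * p.comp (Polynomial.C ((M:ℂ)⁻¹) *
              (Polynomial.X - Polynomial.C (s:ℂ)))).degree
          ≤ Polynomial.degree (Polynomial.C (a s)) + _ := Polynomial.degree_mul_le _ _
        _ ≤ 0 + _ := add_le_add Polynomial.degree_C_le le_rfl
        _ = _ := zero_add _
        _ < (J : WithBot ℕ) := hcomp
    · intro x
      rw [hpart1 x]
      rw [Polynomial.eval_finset_sum]
      refine Finset.sum_congr rfl fun s _ => ?_
      simp [Polynomial.eval_comp]
      ring
end

section
/- Let M ≥ 2 and a: ℤ → ℂ a finitely supported mask with ∑_k a(k) = 1, order J ≥ 1 sum rules with respect to M, and moments ∑_{k∈ℤ} k^j a(k) = m_a^j for all j = 0, …, J−1 with m_a := (M−1) s_a for some s_a ∈ ℝ. Then for every polynomial p of degree < J and every n ≥ 1, S_{a,M}^n p = p(M^{-n}(s_a + ·) − s_a) as sequences on ℤ, where S_{a,M} is the subdivision operator. -/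
open Polynomial
open LaurentPolynomial (T)
open scoped LaurentPolynomial

section CosetSum

variable {R : Type*} [CommRing R] (M : ℕ)

noncomputable def cosetSum (F : R[T;T⁻¹]) (q : R[X]) (r : ZMod M) : R :=
  ∑ᶠ l : ℤ, if (l : ZMod M) = r then F.coeff l * q.eval (l : R) else 0

lemma hasFiniteSupport_ite_coeff_mul (F : R[T;T⁻¹]) (p : ℤ → Prop) [DecidablePred p]
    (g : ℤ → R) : Function.HasFiniteSupport fun l => if p l then F.coeff l * g l else 0 :=
  F.coeff.hasFiniteSupport.subset fun l hl => by
    by_contra h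
    simp_all

lemma cosetSum_add_left (F G : R[T;T⁻¹]) (q : R[X]) (r : ZMod M) :
    cosetSum M (F + G) q r = cosetSum M F q r + cosetSum M G q r := by
  rw [cosetSum, cosetSum, cosetSum, ← finsum_add_distrib (hasFiniteSupport_ite_coeff_mul ..)
    (hasFiniteSupport_ite_coeff_mul ..)]
  refine finsum_congr fun l => ?_
  split_ifs <;> simp [add_mul]

lemma cosetSum_sub_right (F : R[T;T⁻¹]) (q₁ q₂ : R[X]) (r : ZMod M) :
    cosetSum M F (q₁ - q₂) r = cosetSum M F q₁ r - cosetSum M F q₂ r := by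
  rw [cosetSum, cosetSum, cosetSum, ← finsum_sub_distrib (hasFiniteSupport_ite_coeff_mul ..)
    (hasFiniteSupport_ite_coeff_mul ..)]
  refine finsum_congr fun l => ?_
  split_ifs <;> simp [mul_sub]

lemma cosetSum_T_mul (i : ℤ) (G : R[T;T⁻¹]) (q : R[X]) (r : ZMod M) :
    cosetSum M (T i * G) q r = cosetSum M G (taylor (i : R) q) (r - i) := by
  rw [cosetSum, ← finsum_comp_equiv (Equiv.addRight i), cosetSum]
  refine finsum_congr fun m => ?_
  have hcoeff : (T i * G).coeff (m + i) = G.coeff m := by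
    rw [T, AddMonoidAlgebra.coeff_single_mul_apply]
    simp
  simp only [Equiv.coe_addRight, hcoeff, taylor_eval, eq_sub_iff_add_eq]
  push_cast
  rfl

/-- The symbol `1 + z + ⋯ + z^(M-1)` whose `J`-th power divides `ã` under the sum rules. -/
noncomputable def boxSymbol : R[T;T⁻¹] := ∑ i ∈ Finset.range M, T (i : ℤ)

lemma cosetSum_boxSymbol_mul (H : R[T;T⁻¹]) (q : R[X]) (r : ZMod M) :
    cosetSum M (boxSymbol M * H) q r
      = ∑ i ∈ Finset.range M, cosetSum M H (taylor (i : R) q) (r - i) := by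
  rw [boxSymbol, Finset.sum_mul]
  refine (map_sum (AddMonoidHom.mk' (cosetSum M · q r) (cosetSum_add_left M · · q r)) _ _).trans
    (Finset.sum_congr rfl fun i _ => ?_)
  simp only [AddMonoidHom.mk'_apply, cosetSum_T_mul]
  push_cast
  rfl

variable [NeZero M]

lemma sum_range_natCast_zmod {A : Type*} [AddCommMonoid A] (g : ZMod M → A) :
    ∑ i ∈ Finset.range M, g i = ∑ x, g x :=
  Finset.sum_nbij' (fun i => (i : ZMod M)) ZMod.val (by simp) (by simp [ZMod.val_lt])
    (fun i hi => ZMod.val_cast_of_lt (Finset.mem_range.mp hi)) (by simp) (by simp)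

lemma sum_range_sub_natCast_zmod {A : Type*} [AddCommMonoid A] (g : ZMod M → A) (r : ZMod M) :
    ∑ i ∈ Finset.range M, g (r - i) = ∑ x, g x :=
  (sum_range_natCast_zmod M (fun x => g (r - x))).trans
    (Fintype.sum_equiv (Equiv.subLeft r) _ _ fun _ => rfl)

lemma sum_cosetSum (F : R[T;T⁻¹]) (q : R[X]) :
    ∑ r : ZMod M, cosetSum M F q r = ∑ᶠ l : ℤ, F.coeff l * q.eval (l : R) := by
  simp only [cosetSum]
  rw [← finsum_sum_comm _ _ fun r _ => hasFiniteSupport_ite_coeff_mul ..]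
  simp

end CosetSum

lemma degree_taylor_sub_lt {R : Type*} [CommRing R] {q : R[X]} {n : ℕ}
    (hq : q.degree < ↑(n + 1)) (c : R) : (taylor c q - q).degree < n := by
  rcases eq_or_ne q 0 with rfl | hq0
  · simp
  have hlt := degree_sub_lt_left (degree_taylor q c) (by simpa using hq0)
    (leadingCoeff_taylor c q)
  rw [degree_taylor, degree_eq_natDegree hq0] at hlt
  rw [degree_eq_natDegree hq0, Nat.cast_lt] at hq
  exact hlt.trans_le (by exact_mod_cast Nat.lt_succ_iff.mp hq)

section SumRules

variable {R : Type*} [CommRing R] (M : ℕ) [NeZero M]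

/- Multiplying by the box symbol turns a coset sum of `q` into the sum over `i < M` of coset sums
of `q(· + i) = q + (q(· + i) - q)`. The `q`-parts run over all residues, and the differences have
lower degree, so their coset sums are constant by induction. -/
theorem cosetSum_boxSymbol_pow_mul_eq (J : ℕ) (b : R[T;T⁻¹]) {q : R[X]} (hq : q.degree < J)
    (r r' : ZMod M) :
    cosetSum M (boxSymbol M ^ J * b) q r = cosetSum M (boxSymbol M ^ J * b) q r' := by
  induction J generalizing q r r' with
  | zero =>
    obtain rfl : q = 0 := degree_eq_bot.mp (Nat.WithBot.lt_zero_iff.mp hq)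
    simp [cosetSum]
  | succ J ih =>
    have hsplit : ∀ r, cosetSum M (boxSymbol M ^ (J + 1) * b) q r
        = ∑ x, cosetSum M (boxSymbol M ^ J * b) q x
          + ∑ i ∈ Finset.range M, cosetSum M (boxSymbol M ^ J * b) (taylor (i : R) q - q) 0 := by
      intro r
      rw [pow_succ', mul_assoc, cosetSum_boxSymbol_mul, ← sum_range_sub_natCast_zmod M _ r,
        ← Finset.sum_add_distrib]
      refine Finset.sum_congr rfl fun i _ => ?_
      rw [← ih (degree_taylor_sub_lt hq _) (r - i), cosetSum_sub_right]
      ring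
    rw [hsplit, hsplit]

theorem natCast_mul_cosetSum_boxSymbol_pow_mul (J : ℕ) (b : R[T;T⁻¹]) {q : R[X]}
    (hq : q.degree < J) (r : ZMod M) :
    (M : R) * cosetSum M (boxSymbol M ^ J * b) q r
      = ∑ᶠ l : ℤ, (boxSymbol M ^ J * b).coeff l * q.eval (l : R) := by
  rw [← sum_cosetSum M, Finset.sum_congr rfl fun x _ => cosetSum_boxSymbol_pow_mul_eq M J b hq x r,
    Finset.sum_const, Finset.card_univ, ZMod.card, nsmul_eq_mul]

lemma cosetSum_intCast (F : R[T;T⁻¹]) (q : R[X]) (j : ℤ) :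
    cosetSum M F q j = ∑ᶠ k : ℤ, F.coeff (j - M * k) * q.eval ((j - M * k : ℤ) : R) := by
  have hinj : Function.Injective fun k : ℤ => j - M * k := fun k k' h => by
    simpa [NeZero.ne M] using h
  have hrange : Set.range (fun k : ℤ => j - M * k) = {l : ℤ | (l : ZMod M) = j} := by
    ext l
    simp only [Set.mem_range, Set.mem_ofPred_eq, ZMod.intCast_eq_intCast_iff_dvd_sub]
    exact ⟨fun ⟨k, hk⟩ => ⟨k, by rw [← hk]; ring⟩, fun ⟨k, hk⟩ => ⟨k, by rw [← hk]; ring⟩⟩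
  rw [← finsum_mem_range (f := fun l : ℤ => F.coeff l * q.eval (l : R)) hinj, hrange,
    finsum_mem_def, cosetSum]
  simp only [Set.indicator_apply, Set.mem_ofPred_eq]

end SumRules

lemma coeff_symb {a : ℤ → ℂ} (ha : (Function.support a).Finite) (l : ℤ) :
    (symb a).coeff l = a l := by
  rw [symb, finsum_eq_sum_of_support_subset _ (s := ha.toFinset) fun k hk => by
    contrapose! hk
    simp_all]
  simp [← LaurentPolynomial.single_eq_C_mul_T, AddMonoidAlgebra.coeff_sum, Finsupp.single_apply,
    eq_comm]

lemma finsum_mul_eval_of_moments {R : Type*} [CommRing R] {a : ℤ → R}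
    (ha : (Function.support a).Finite) {J : ℕ} {m : R}
    (hmom : ∀ j < J, ∑ᶠ k : ℤ, (k : R) ^ j * a k = m ^ j) {q : R[X]} (hq : q.degree < J) :
    ∑ᶠ l : ℤ, a l * q.eval (l : R) = q.eval m := by
  rcases eq_or_ne q 0 with rfl | hq0
  · simp
  have hJ := (natDegree_lt_iff_degree_lt hq0).2 hq
  have hfin (i : ℕ) : Function.HasFiniteSupport fun l : ℤ => (l : R) ^ i * a l :=
    ha.subset (Function.support_mul_subset_right _ _)
  calc ∑ᶠ l : ℤ, a l * q.eval (l : R)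
      = ∑ᶠ l : ℤ, ∑ i ∈ Finset.range J, q.coeff i * ((l : R) ^ i * a l) := by
        refine finsum_congr fun l => ?_
        rw [eval_eq_sum_range' hJ, Finset.mul_sum]
        exact Finset.sum_congr rfl fun i _ => by ring
    _ = ∑ i ∈ Finset.range J, q.coeff i * ∑ᶠ l : ℤ, (l : R) ^ i * a l := by
        rw [finsum_sum_comm _ _ fun i _ => (hfin i).subset (Function.support_mul_subset_right _ _)]
        exact Finset.sum_congr rfl fun i _ => (mul_finsum' _ _ (hfin i)).symm
    _ = q.eval m := by
        rw [eval_eq_sum_range' hJ]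
        exact Finset.sum_congr rfl fun i hi => by rw [hmom i (Finset.mem_range.mp hi)]

lemma degree_comp_C_mul_X_add_C {R : Type*} [Semiring R] [NoZeroDivisors R] (p : R[X]) {c : R}
    (hc : c ≠ 0) (d : R) : (p.comp (C c * X + C d)).degree = p.degree := by
  rw [degree_comp (by rw [degree_linear hc]; exact zero_lt_one), degree_linear hc, mul_one]

section Subdivision

variable {M : ℕ} [NeZero M] {J : ℕ} {a : ℤ → ℂ} {b : ℂ[T;T⁻¹]} {c : ℂ}

theorem subdiv_eval_eq_eval_comp (ha : (Function.support a).Finite)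
    (hb : symb a = boxSymbol M ^ J * b)
    (hmom : ∀ j < J, ∑ᶠ k : ℤ, (k : ℂ) ^ j * a k = (((M : ℂ) - 1) * c) ^ j)
    {p : ℂ[X]} (hp : p.degree < J) :
    subdiv M a (fun t : ℤ => p.eval (t : ℂ))
      = fun t : ℤ => (p.comp (C (M : ℂ)⁻¹ * X + C ((M : ℂ)⁻¹ * c - c))).eval (t : ℂ) := by
  funext j
  have hM : (M : ℂ) ≠ 0 := Nat.cast_ne_zero.mpr (NeZero.ne M)
  set q := p.comp (C (-(M : ℂ)⁻¹) * X + C ((M : ℂ)⁻¹ * j)) with hq_def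
  have hq : q.degree < J := by rwa [degree_comp_C_mul_X_add_C p (by simpa using hM)]
  have hq_eval (k : ℤ) : q.eval ((j - M * k : ℤ) : ℂ) = p.eval (k : ℂ) := by
    simp only [hq_def, eval_comp, eval_add, eval_mul, eval_C, eval_X]
    congr 1
    push_cast
    field_simp
    ring
  calc subdiv M a (fun t : ℤ => p.eval (t : ℂ)) j = M * cosetSum M (symb a) q j := by
        rw [subdiv, cosetSum_intCast]
        exact congrArg _ (finsum_congr fun k => by rw [coeff_symb ha, hq_eval, mul_comm])
    _ = ∑ᶠ l : ℤ, a l * q.eval (l : ℂ) := by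
        rw [hb, natCast_mul_cosetSum_boxSymbol_pow_mul M J b hq, ← hb]
        simp only [coeff_symb ha]
    _ = q.eval (((M : ℂ) - 1) * c) := finsum_mul_eval_of_moments ha hmom hq
    _ = _ := by
        simp only [hq_def, eval_comp, eval_add, eval_mul, eval_C, eval_X]
        congr 1
        field_simp
        ring

theorem subdiv_iterate_eval (ha : (Function.support a).Finite)
    (hb : symb a = boxSymbol M ^ J * b)
    (hmom : ∀ j < J, ∑ᶠ k : ℤ, (k : ℂ) ^ j * a k = (((M : ℂ) - 1) * c) ^ j)
    (n : ℕ) {p : ℂ[X]} (hp : p.degree < J) (k : ℤ) :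
    (subdiv M a)^[n] (fun t : ℤ => p.eval (t : ℂ)) k
      = p.eval (((M : ℂ) ^ n)⁻¹ * (c + k) - c) := by
  induction n generalizing p with
  | zero => simp
  | succ n ih =>
    have hM : (M : ℂ) ≠ 0 := Nat.cast_ne_zero.mpr (NeZero.ne M)
    rw [Function.iterate_succ_apply, subdiv_eval_eq_eval_comp ha hb hmom hp,
      ih (by rwa [degree_comp_C_mul_X_add_C p (inv_ne_zero hM)]), eval_comp]
    simp only [eval_add, eval_mul, eval_C, eval_X]
    congr 1
    field_simp
    ring

end Subdivision

theorem subdivision_iterate_polynomial_general (M : ℕ) (hM : 2 ≤ M) (J : ℕ)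
    (a : ℤ → ℂ) (ha : (Function.support a).Finite)
    (hsr : ∃ b : LaurentPolynomial ℂ,
      symb a = (∑ i ∈ Finset.range M, LaurentPolynomial.T (i : ℤ)) ^ J * b)
    (s : ℝ)
    (hmom : ∀ j : ℕ, j < J →
      ∑ᶠ k : ℤ, (k : ℂ) ^ j * a k = (((M : ℂ) - 1) * (s : ℂ)) ^ j) :
    ∀ p : Polynomial ℂ, p.degree < J → ∀ n : ℕ, 1 ≤ n → ∀ k : ℤ,
      (subdiv M a)^[n] (fun t : ℤ => Polynomial.eval (t : ℂ) p) k
        = Polynomial.eval (((M : ℂ) ^ n)⁻¹ * ((s : ℂ) + (k : ℂ)) - (s : ℂ)) p := by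
  have : NeZero M := ⟨by omega⟩
  obtain ⟨b, hb⟩ := hsr
  exact fun p hp n _ k => subdiv_iterate_eval ha hb hmom n hp k

theorem subdivision_iterate_polynomial (M : ℕ) (hM : 2 ≤ M) (J : ℕ) (hJ : 1 ≤ J)
    (a : ℤ → ℂ) (ha : (Function.support a).Finite)
    (hsum : ∑ᶠ k : ℤ, a k = 1)
    (hsr : ∃ b : LaurentPolynomial ℂ,
      symb a = (∑ i ∈ Finset.range M, LaurentPolynomial.T (i : ℤ)) ^ J * b)
    (s : ℝ)
    (hmom : ∀ j : ℕ, j < J →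
      ∑ᶠ k : ℤ, (k : ℂ) ^ j * a k = (((M : ℂ) - 1) * (s : ℂ)) ^ j) :
    ∀ p : Polynomial ℂ, p.degree < J → ∀ n : ℕ, 1 ≤ n → ∀ k : ℤ,
      (subdiv M a)^[n] (fun t : ℤ => Polynomial.eval (t : ℂ) p) k
        = Polynomial.eval (((M : ℂ) ^ n)⁻¹ * ((s : ℂ) + (k : ℂ)) - (s : ℂ)) p :=
  subdivision_iterate_polynomial_general M hM J a ha hsr s hmom
end

section
/- There is no compactly supported continuous function φ: ℝ → ℂ, not identically zero, satisfying the refinement equation φ = 2 ∑_{k∈ℤ} a(k) φ(2·−k) for some finitely supported mask a: ℤ → ℂ, together with the interpolation condition φ(1/2 + k) = δ(k) for all k ∈ ℤ (where δ(0)=1 and δ(k)=0 for k≠0). -/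
/-!
A compactly supported solution of the refinement equation lives in the convex hull
`[kmin, kmax]` of the mask support, and if it is continuous its support is open, hence inside
`(kmin, kmax)`. Let `p ≤ q` be the extreme integers where `φ` is nonzero, so `kmin < p` and
`q < kmax`. Sampling the refinement equation at `(kmax + q)/2` leaves the single term
`2 a(kmax) φ(q) ≠ 0`. This point is not an integer, since `φ` vanishes at integers beyond `q`, so
by the interpolation condition it is `1/2`, i.e. `kmax + q = 1`. Symmetrically `kmin + p = 1`,
contradicting `kmin < p ≤ q < kmax`.
-/

open Function Set

def IsRefinable {R : Type*} [Semiring R] (φ : ℝ → R) (a : ℤ → R) : Prop :=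
  ∀ x : ℝ, φ x = 2 * ∑ᶠ k : ℤ, a k * φ (2 * x - k)

namespace IsRefinable

variable {R : Type*} [Semiring R] {φ : ℝ → R} {a : ℤ → R}

theorem comp_neg (h : IsRefinable φ a) : IsRefinable (fun x ↦ φ (-x)) (fun k ↦ a (-k)) := by
  intro x
  dsimp only
  rw [h (-x), ← finsum_comp_equiv (Equiv.neg ℤ)]
  congr 2 with k
  simp only [Equiv.neg_apply, Int.cast_neg]
  ring_nf

theorem exists_ne_zero (h : IsRefinable φ a) {x : ℝ} (hx : φ x ≠ 0) :
    ∃ k : ℤ, a k ≠ 0 ∧ φ (2 * x - k) ≠ 0 := by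
  by_contra! H
  refine hx ?_
  rw [h x, finsum_eq_zero_of_forall_eq_zero fun k ↦ ?_, mul_zero]
  by_cases hk : a k = 0
  · rw [hk, zero_mul]
  · rw [H k hk, mul_zero]

/-- If `φ x ≠ 0` with `x` below `(inf supp φ + m)/2`, the refinement equation produces a point
of `supp φ` below its infimum. -/
theorem le_of_ne_zero (h : IsRefinable φ a) (hbdd : BddBelow (support φ)) {m : ℝ}
    (ha : ∀ k, a k ≠ 0 → m ≤ k) {x : ℝ} (hx : φ x ≠ 0) : m ≤ x := by
  by_contra! hxm
  have hinf : sInf (support φ) < (sInf (support φ) + m) / 2 := by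
    linarith [csInf_le hbdd (mem_support.mpr hx)]
  obtain ⟨y, hy, hy_lt⟩ := exists_lt_of_csInf_lt ⟨x, hx⟩ hinf
  obtain ⟨k, hk, hyk⟩ := h.exists_ne_zero hy
  linarith [csInf_le hbdd (mem_support.mpr hyk), ha k hk]

theorem ge_of_ne_zero (h : IsRefinable φ a) (hbdd : BddAbove (support φ)) {M : ℝ}
    (ha : ∀ k, a k ≠ 0 → k ≤ M) {x : ℝ} (hx : φ x ≠ 0) : x ≤ M := by
  have hbdd' : BddBelow (support fun x ↦ φ (-x)) := by
    obtain ⟨b, hb⟩ := hbdd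
    exact ⟨-b, fun y hy ↦ neg_le.mp (hb hy)⟩
  have := h.comp_neg.le_of_ne_zero hbdd' (m := -M)
    (fun k hk ↦ by have := ha (-k) hk; push_cast at this; linarith) (x := -x) (by rwa [neg_neg])
  linarith

theorem support_subset_Ioo [TopologicalSpace R] [T1Space R] (h : IsRefinable φ a)
    (hc : Continuous φ) (hcs : HasCompactSupport φ) {m M : ℝ} (hm : ∀ k, a k ≠ 0 → m ≤ k)
    (hM : ∀ k, a k ≠ 0 → k ≤ M) : support φ ⊆ Ioo m M := by
  have hbdd : Bornology.IsBounded (support φ) := hcs.isBounded.subset (subset_tsupport φ)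
  rw [← interior_Icc, hc.isOpen_support.subset_interior_iff]
  exact fun x hx ↦ ⟨h.le_of_ne_zero hbdd.bddBelow hm hx, h.ge_of_ne_zero hbdd.bddAbove hM hx⟩

theorem apply_half_eq_of_unique (h : IsRefinable φ a) {K Q : ℤ}
    (huniq : ∀ k, a k ≠ 0 → φ (K + Q - k : ℤ) ≠ 0 → k = K) :
    φ ((K + Q : ℤ) / 2) = 2 * (a K * φ Q) := by
  have hsum : ∀ k : ℤ, 2 * ((K + Q : ℤ) / 2 : ℝ) - k = (K + Q - k : ℤ) := fun k ↦ by
    push_cast; ring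
  rw [h, finsum_eq_single _ K fun k hk ↦ ?_]
  · rw [hsum, add_sub_cancel_left]
  · by_contra hne
    rw [hsum] at hne
    exact hk (huniq k (left_ne_zero_of_mul hne) (right_ne_zero_of_mul hne))

theorem add_eq_one_of_unique [NoZeroDivisors R] [NeZero (2 : R)] (h : IsRefinable φ a)
    (hint : ∀ k : ℤ, φ (1 / 2 + k) = if k = 0 then 1 else 0) {K Q : ℤ} (hK : a K ≠ 0)
    (hQ : φ Q ≠ 0) (huniq : ∀ k, a k ≠ 0 → φ (K + Q - k : ℤ) ≠ 0 → k = K)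
    (hne_two_mul : ∀ m : ℤ, φ m ≠ 0 → K + Q ≠ 2 * m) : K + Q = 1 := by
  have hne : φ ((K + Q : ℤ) / 2) ≠ 0 := by
    rw [h.apply_half_eq_of_unique huniq]
    exact mul_ne_zero two_ne_zero (mul_ne_zero hK hQ)
  obtain ⟨m, hm | hm⟩ := Int.even_or_odd' (K + Q)
  · refine absurd hm (hne_two_mul m ?_)
    rwa [hm, Int.cast_mul, Int.cast_ofNat, mul_div_cancel_left₀ _ two_ne_zero] at hne
  · have hhalf : ((K + Q : ℤ) / 2 : ℝ) = 1 / 2 + m := by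
      rw [hm]; push_cast; ring
    rw [hhalf, hint m] at hne
    rw [hm, show m = 0 by by_contra hm0; exact hne (if_neg hm0)]
    rfl

end IsRefinable

theorem no_half_interpolating_refinable :
    ¬ ∃ (φ : ℝ → ℂ) (a : ℤ → ℂ),
        Continuous φ ∧ HasCompactSupport φ ∧ (Function.support a).Finite ∧
        (∃ x : ℝ, φ x ≠ 0) ∧
        (∀ x : ℝ, φ x = 2 * ∑ᶠ k : ℤ, a k * φ (2 * x - (k : ℝ))) ∧
        (∀ k : ℤ, φ (1 / 2 + (k : ℝ)) = if k = 0 then 1 else 0) := by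
  rintro ⟨φ, a, hc, hcs, hfa, -, href, hint⟩
  replace href : IsRefinable φ a := href
  have hhalf : φ (1 / 2) = 1 := by simpa using hint 0
  obtain ⟨k₀, hk₀, hφk₀⟩ := href.exists_ne_zero (x := 1 / 2) (by rw [hhalf]; exact one_ne_zero)
  obtain ⟨kmin, hkmin, hkmin_le⟩ := Int.exists_least_of_bdd hfa.bddBelow ⟨k₀, hk₀⟩
  obtain ⟨kmax, hkmax, hkmax_ge⟩ := Int.exists_greatest_of_bdd hfa.bddAbove ⟨k₀, hk₀⟩
  have hsupp := href.support_subset_Ioo hc hcs (m := kmin) (M := kmax)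
    (fun k hk ↦ by exact_mod_cast hkmin_le k hk) (fun k hk ↦ by exact_mod_cast hkmax_ge k hk)
  have hφ_gt : ∀ j : ℤ, φ j ≠ 0 → kmin < j := fun j hj ↦ by exact_mod_cast (hsupp hj).1
  have hφ_lt : ∀ j : ℤ, φ j ≠ 0 → j < kmax := fun j hj ↦ by exact_mod_cast (hsupp hj).2
  have hφ₀ : φ (1 - k₀ : ℤ) ≠ 0 := by simpa using hφk₀
  obtain ⟨p, hp, hp_le⟩ := Int.exists_least_of_bdd
    ⟨kmin, fun j hj ↦ (hφ_gt j hj).le⟩ ⟨_, hφ₀⟩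
  obtain ⟨q, hq, hq_ge⟩ := Int.exists_greatest_of_bdd
    ⟨kmax, fun j hj ↦ (hφ_lt j hj).le⟩ ⟨_, hφ₀⟩
  have htop : kmax + q = 1 := href.add_eq_one_of_unique hint hkmax hq
    (fun k hk hφk ↦ by have := hkmax_ge k hk; have := hq_ge _ hφk; omega)
    (fun m hm ↦ by have := hq_ge m hm; have := hφ_lt q hq; omega)
  have hbot : kmin + p = 1 := href.add_eq_one_of_unique hint hkmin hp
    (fun k hk hφk ↦ by have := hkmin_le k hk; have := hp_le _ hφk; omega)
    (fun m hm ↦ by have := hp_le m hm; have := hφ_gt p hp; omega)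
  have := hp_le q hq
  have := hφ_gt p hp
  have := hφ_lt q hq
  omega
end

section
/- Let φ be a compactly supported continuous solution of φ = 2 ∑_{k∈ℤ} a(k) φ(2·−k) with finitely supported mask a supported exactly in [l_a, h_a] (a(l_a) ≠ 0 ≠ a(h_a)), satisfying φ(1/2 + k) = δ(k) for all k ∈ ℤ. Define w(k) := φ(1 + k) and suppose w is not identically zero, with support exactly [l_w, h_w]. Then l_a ≤ l_w ≤ h_w ≤ h_a − 2, l_a + l_w is even, h_a + h_w is even, l_w = −l_a, and h_w = −h_a. -/
theorem half_interpolating_support_relations (φ : ℝ → ℂ) (a : ℤ → ℂ)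
    (la ha lw hw : ℤ)
    (hc : Continuous φ) (hcs : HasCompactSupport φ)
    (href : ∀ x : ℝ, φ x = 2 * ∑ᶠ k : ℤ, a k * φ (2 * x - (k : ℝ)))
    (hsa : ∀ k : ℤ, a k ≠ 0 → la ≤ k ∧ k ≤ ha)
    (hala : a la ≠ 0) (haha : a ha ≠ 0)
    (hint : ∀ k : ℤ, φ (1 / 2 + (k : ℝ)) = if k = 0 then 1 else 0)
    (hwne : ∃ k : ℤ, φ (1 + (k : ℝ)) ≠ 0)
    (hsw : ∀ k : ℤ, φ (1 + (k : ℝ)) ≠ 0 → lw ≤ k ∧ k ≤ hw)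
    (hwlw : φ (1 + (lw : ℝ)) ≠ 0) (hwhw : φ (1 + (hw : ℝ)) ≠ 0) :
    la ≤ lw ∧ lw ≤ hw ∧ hw ≤ ha - 2 ∧ Even (la + lw) ∧ Even (ha + hw) ∧
      lw = -la ∧ hw = -ha := by
  classical
  -- support of φ
  set S : Set ℝ := Function.support φ with hS
  have hSne : S.Nonempty := by
    obtain ⟨k, hk⟩ := hwne
    exact ⟨1 + (k : ℝ), hk⟩
  have hSsub : S ⊆ tsupport φ := subset_closure
  have hbddB : BddBelow S := (hcs.isBounded.bddBelow).mono hSsub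
  have hbddA : BddAbove S := (hcs.isBounded.bddAbove).mono hSsub
  -- from refinement: a nonzero value forces a nonzero term
  have hterm : ∀ x : ℝ, φ x ≠ 0 → ∃ k : ℤ, a k ≠ 0 ∧ φ (2 * x - (k : ℝ)) ≠ 0 := by
    intro x hx
    by_contra h
    push_neg at h
    apply hx
    rw [href x]
    have : (∑ᶠ k : ℤ, a k * φ (2 * x - (k : ℝ))) = 0 := by
      apply finsum_eq_zero_of_forall_eq_zero
      intro k
      by_cases hk : a k = 0
      · simp [hk]
      · simp [h k hk]
    rw [this, mul_zero]
  -- φ vanishes on (-∞, la]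
  set s : ℝ := sInf S with hs
  have hstep : ∀ x ∈ S, (s + la) / 2 ≤ x := by
    intro x hx
    obtain ⟨k, hk1, hk2⟩ := hterm x hx
    have hk3 : la ≤ k := (hsa k hk1).1
    have hk4 : s ≤ 2 * x - (k : ℝ) := csInf_le hbddB hk2
    have : (la : ℝ) ≤ (k : ℝ) := by exact_mod_cast hk3
    linarith
  have hsla : (la : ℝ) ≤ s := by
    have := le_csInf hSne hstep
    rw [← hs] at this
    linarith
  have hzlo : ∀ x : ℝ, x ≤ (la : ℝ) → φ x = 0 := by
    have hclosed : IsClosed (φ ⁻¹' {0}) := isClosed_singleton.preimage hc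
    have h1 : Set.Iio s ⊆ φ ⁻¹' {0} := by
      intro x hx
      by_contra hx0
      have : s ≤ x := csInf_le hbddB hx0
      exact absurd this (not_le.2 hx)
    have h2 : Set.Iic s ⊆ φ ⁻¹' {0} := by
      rw [← closure_Iio]
      exact hclosed.closure_subset_iff.2 h1
    intro x hx
    exact h2 (le_trans hx hsla)
  -- φ vanishes on [ha, ∞)
  set t : ℝ := sSup S with ht
  have hstep' : ∀ x ∈ S, x ≤ (t + ha) / 2 := by
    intro x hx
    obtain ⟨k, hk1, hk2⟩ := hterm x hx
    have hk3 : k ≤ ha := (hsa k hk1).2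
    have hk4 : 2 * x - (k : ℝ) ≤ t := le_csSup hbddA hk2
    have : (k : ℝ) ≤ (ha : ℝ) := by exact_mod_cast hk3
    linarith
  have hsha : t ≤ (ha : ℝ) := by
    have := csSup_le hSne hstep'
    rw [← ht] at this
    linarith
  have hzhi : ∀ x : ℝ, (ha : ℝ) ≤ x → φ x = 0 := by
    have hclosed : IsClosed (φ ⁻¹' {0}) := isClosed_singleton.preimage hc
    have h1 : Set.Ioi t ⊆ φ ⁻¹' {0} := by
      intro x hx
      by_contra hx0
      have : x ≤ t := le_csSup hbddA hx0
      exact absurd this (not_le.2 hx)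
    have h2 : Set.Ici t ⊆ φ ⁻¹' {0} := by
      rw [← closure_Ioi]
      exact hclosed.closure_subset_iff.2 h1
    intro x hx
    exact h2 (le_trans hsha hx)
  -- basic support bounds for w and a
  have ha0 : ∀ k : ℤ, k < la ∨ ha < k → a k = 0 := by
    intro k hk
    by_contra h
    obtain ⟨h1, h2⟩ := hsa k h
    omega
  have hw0 : ∀ m : ℤ, m < lw ∨ hw < m → φ (1 + (m : ℝ)) = 0 := by
    intro m hm
    by_contra h
    obtain ⟨h1, h2⟩ := hsw m h
    omega
  -- la ≤ lw
  have hla_lw : la ≤ lw := by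
    by_contra h
    push_neg at h
    apply hwlw
    apply hzlo
    have : (lw : ℝ) + 1 ≤ (la : ℝ) := by exact_mod_cast (by omega : lw + 1 ≤ la)
    linarith
  -- hw ≤ ha - 2
  have hhw_ha : hw ≤ ha - 2 := by
    by_contra h
    push_neg at h
    apply hwhw
    apply hzhi
    have : (ha : ℝ) ≤ (hw : ℝ) + 1 := by exact_mod_cast (by omega : ha ≤ hw + 1)
    linarith
  have hlw_hw : lw ≤ hw := (hsw lw hwlw).2
  -- key relations
  have key : ∀ j : ℤ, (if j = 0 then (1 : ℂ) else 0)
      = 2 * ∑ᶠ k : ℤ, a k * φ (1 + ((2 * j - k : ℤ) : ℝ)) := by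
    intro j
    rw [← hint j, href (1 / 2 + (j : ℝ))]
    congr 1
    apply finsum_congr
    intro k
    congr 2
    push_cast
    ring
  have key2 : ∀ j : ℤ, φ (1 + (j : ℝ))
      = 2 * ∑ᶠ k : ℤ, a k * φ (1 + ((1 + 2 * j - k : ℤ) : ℝ)) := by
    intro j
    rw [href (1 + (j : ℝ))]
    congr 1
    apply finsum_congr
    intro k
    congr 2
    push_cast
    ring
  -- lw = -la
  have hbot : lw = -la := by
    rcases Int.even_or_odd (la + lw) with ⟨j, hj⟩ | ⟨j, hj⟩
    · -- la + lw = 2j, collapse the key relation at j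
      have hcol : (∑ᶠ k : ℤ, a k * φ (1 + ((2 * j - k : ℤ) : ℝ)))
          = a la * φ (1 + (lw : ℝ)) := by
        rw [finsum_eq_single _ la]
        · congr 2
          exact_mod_cast (by omega : 1 + (2 * j - la) = 1 + lw)
        · intro k hk
          rcases lt_or_gt_of_ne hk with h | h
          · rw [ha0 k (Or.inl h), zero_mul]
          · rw [hw0 (2 * j - k) (Or.inl (by omega)), mul_zero]
      have hne : (if j = 0 then (1 : ℂ) else 0) ≠ 0 := by
        rw [key j, hcol]
        exact mul_ne_zero two_ne_zero (mul_ne_zero hala hwlw)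
      have hj0 : j = 0 := by
        by_contra h
        simp [h] at hne
      omega
    · -- la + lw = 2j + 1, collapse key2 at j : contradiction
      exfalso
      have hcol : (∑ᶠ k : ℤ, a k * φ (1 + ((1 + 2 * j - k : ℤ) : ℝ)))
          = a la * φ (1 + (lw : ℝ)) := by
        rw [finsum_eq_single _ la]
        · congr 2
          exact_mod_cast (by omega : 1 + (1 + 2 * j - la) = 1 + lw)
        · intro k hk
          rcases lt_or_gt_of_ne hk with h | h
          · rw [ha0 k (Or.inl h), zero_mul]
          · rw [hw0 (1 + 2 * j - k) (Or.inl (by omega)), mul_zero]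
      have hne : φ (1 + (j : ℝ)) ≠ 0 := by
        rw [key2 j, hcol]
        exact mul_ne_zero two_ne_zero (mul_ne_zero hala hwlw)
      have := (hsw j hne).1
      omega
  -- hw = -ha
  have htop : hw = -ha := by
    rcases Int.even_or_odd (ha + hw) with ⟨j, hj⟩ | ⟨j, hj⟩
    · have hcol : (∑ᶠ k : ℤ, a k * φ (1 + ((2 * j - k : ℤ) : ℝ)))
          = a ha * φ (1 + (hw : ℝ)) := by
        rw [finsum_eq_single _ ha]
        · congr 2
          exact_mod_cast (by omega : 1 + (2 * j - ha) = 1 + hw)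
        · intro k hk
          rcases lt_or_gt_of_ne hk with h | h
          · rw [hw0 (2 * j - k) (Or.inr (by omega)), mul_zero]
          · rw [ha0 k (Or.inr h), zero_mul]
      have hne : (if j = 0 then (1 : ℂ) else 0) ≠ 0 := by
        rw [key j, hcol]
        exact mul_ne_zero two_ne_zero (mul_ne_zero haha hwhw)
      have hj0 : j = 0 := by
        by_contra h
        simp [h] at hne
      omega
    · exfalso
      have hcol : (∑ᶠ k : ℤ, a k * φ (1 + ((1 + 2 * j - k : ℤ) : ℝ)))
          = a ha * φ (1 + (hw : ℝ)) := by
        rw [finsum_eq_single _ ha]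
        · congr 2
          exact_mod_cast (by omega : 1 + (1 + 2 * j - ha) = 1 + hw)
        · intro k hk
          rcases lt_or_gt_of_ne hk with h | h
          · rw [hw0 (1 + 2 * j - k) (Or.inr (by omega)), mul_zero]
          · rw [ha0 k (Or.inr h), zero_mul]
      have hne : φ (1 + (j : ℝ)) ≠ 0 := by
        rw [key2 j, hcol]
        exact mul_ne_zero two_ne_zero (mul_ne_zero haha hwhw)
      have := (hsw j hne).2
      omega
  refine ⟨hla_lw, hlw_hw, hhw_ha, ⟨0, by omega⟩, ⟨0, by omega⟩, hbot, htop⟩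
end
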